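/- arXiv:1505.01261 — 2 statements merged into one kernel-verified Lean document; each statement's English description precedes it below -/
import Mathlib

section
/- Let K ⊆ L be a finite separable extension of fields and c₀ ∈ L an element generating the extension, i.e. L = K(c₀). Let x ∈ L[[T]] be any formal power series with constant coefficient c₀. If a power series ω ∈ L[[T]] satisfies Tr_{L/K}(coeff_i(xⁿ · ω)) = 0 for all natural numbers n ≥ 0 and i ≥ 0, then ω = 0. -/
/-!
By strong induction on `i`: once the coefficients of `ω` below `i` vanish, the `i`-th
coefficient of `xⁿ ω` is `c₀ⁿ · coeff_i ω`. So `coeff_i ω` is trace-orthogonal to every power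
of `c₀`, and these span `L` over `K`; nondegeneracy of the trace form of the separable
extension `L/K` forces `coeff_i ω = 0`.
-/

open PowerSeries

theorem Algebra.span_range_pow_eq_top_of_adjoin_eq_top {R A : Type*} [CommSemiring R]
    [Semiring A] [Algebra R A] {c : A} (hgen : Algebra.adjoin R {c} = ⊤) :
    Submodule.span R (Set.range (c ^ ·)) = ⊤ := by
  rw [← Submonoid.coe_powers, Submonoid.powers_eq_closure, ← Algebra.adjoin_eq_span, hgen,
    Algebra.top_toSubmodule]

theorem Algebra.eq_zero_of_trace_pow_mul_eq_zero {K L : Type*} [Field K] [Field L] [Algebra K L]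
    [FiniteDimensional K L] [Algebra.IsSeparable K L] {c a : L}
    (hgen : IntermediateField.adjoin K {c} = ⊤) (h : ∀ n : ℕ, trace K L (c ^ n * a) = 0) :
    a = 0 := by
  have hspan :=
    span_range_pow_eq_top_of_adjoin_eq_top (IntermediateField.adjoin_eq_top_iff.mp hgen)
  have htrace : traceForm K L a = 0 :=
    LinearMap.ext_on_range hspan fun n ↦ by simpa [mul_comm a] using h n
  exact (traceForm_nondegenerate K L).1 a fun y ↦ LinearMap.congr_fun htrace y

theorem PowerSeries.coeff_mul_eq_constantCoeff_mul {R : Type*} [CommSemiring R] {φ ψ : R⟦X⟧}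
    {i : ℕ} (h : ∀ j < i, coeff j ψ = 0) : coeff i (φ * ψ) = constantCoeff φ * coeff i ψ := by
  obtain ⟨ψ', rfl⟩ := X_pow_dvd_iff.mpr h
  rw [mul_left_comm, coeff_X_pow_mul', coeff_X_pow_mul']
  simp [coeff_zero_eq_constantCoeff]

/-- Let `L/K` be a finite separable field extension generated by a primitive element `c₀`,
and let `x ∈ L[[T]]` be a power series with constant coefficient `c₀`. If a power series
`ω ∈ L[[T]]` satisfies `Tr_{L/K}(coeff_i(xⁿ · ω)) = 0` for all `n, i ≥ 0`, then `ω = 0`. -/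
theorem powerSeries_eq_zero_of_trace_coeff_pow_mul_eq_zero
    (K L : Type*) [Field K] [Field L] [Algebra K L] [FiniteDimensional K L]
    [Algebra.IsSeparable K L] (c₀ : L)
    (hgen : IntermediateField.adjoin K {c₀} = ⊤)
    (x ω : PowerSeries L)
    (hx : PowerSeries.constantCoeff x = c₀)
    (h : ∀ n i : ℕ, Algebra.trace K L (PowerSeries.coeff i (x ^ n * ω)) = 0) :
    ω = 0 := by
  ext i
  induction i using Nat.strong_induction_on with
  | _ i ih =>
    refine Algebra.eq_zero_of_trace_pow_mul_eq_zero hgen fun n ↦ ?_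
    rw [← hx, ← map_pow, ← coeff_mul_eq_constantCoeff_mul ih]
    exact h n i
end

section
/- Let B be a Dedekind domain with fraction field F, let E/F be a finite Galois extension with Galois group G, and let A be the integral closure of B in E. Let 𝔭 be a nonzero prime ideal of B and fix a prime ideal 𝔓₀ of A lying over 𝔭. Suppose that to each prime 𝔓 of A lying over 𝔭 is assigned an element x_𝔓 ∈ E, and that for every g ∈ E one has Σ_{τ ∈ G} τ(g · x_{τ⁻¹(𝔓₀)}) = 0 in E, where τ⁻¹(𝔓₀) denotes the image of 𝔓₀ under the action of τ⁻¹ on the primes of A over 𝔭. Then x_𝔓 = 0 for every prime 𝔓 of A over 𝔭. -/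
/-!
By Dedekind's independence of characters, `∑ τ, τ g * τ (x (τ⁻¹ 𝔓₀)) = 0` for all `g` forces
every coefficient `τ (x (τ⁻¹ 𝔓₀))` to vanish. Since the Galois group acts transitively on the
primes of `A` over `𝔭`, every such prime is of the form `τ⁻¹ 𝔓₀`.
-/

theorem AlgEquiv.linearIndependent_coeFn (F E : Type*) [CommSemiring F] [CommRing E] [IsDomain E]
    [Algebra F E] : LinearIndependent E (fun τ : E ≃ₐ[F] E ↦ (τ : E → E)) :=
  (linearIndependent_monoidHom E E).comp (fun τ : E ≃ₐ[F] E ↦ (τ : E →* E))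
    fun _ _ h ↦ AlgEquiv.ext (DFunLike.congr_fun h ·)

theorem AlgEquiv.eq_zero_of_forall_sum_apply_mul_eq_zero {F E : Type*} [CommSemiring F]
    [CommRing E] [IsDomain E] [Algebra F E] [Fintype (E ≃ₐ[F] E)] {y : (E ≃ₐ[F] E) → E}
    (h : ∀ g, ∑ τ : E ≃ₐ[F] E, τ (g * y τ) = 0) (τ : E ≃ₐ[F] E) : y τ = 0 := by
  have hτ : τ (y τ) = 0 := by
    refine Fintype.linearIndependent_iff.1 (linearIndependent_coeFn F E) (fun σ ↦ σ (y σ)) ?_ τ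
    funext g
    simpa [Finset.sum_apply, mul_comm] using h g
  exact (map_eq_zero_iff τ τ.injective).1 hτ

theorem eq_zero_of_sum_galois_conjugates_eq_zero_general
    (B : Type*) [CommRing B] [IsDedekindDomain B]
    (F : Type*) [Field F] [Algebra B F] [IsFractionRing B F]
    (E : Type*) [Field E] [Algebra F E] [FiniteDimensional F E] [IsGalois F E]
    (A : Type*) [CommRing A] [Algebra B A] [Algebra A E] [Algebra B E]
    [IsScalarTower B A E] [IsScalarTower B F E] [IsIntegralClosure A B E]
    (𝔭 : Ideal B)
    (𝔓₀ : Ideal A) (hP0 : 𝔓₀.IsPrime) (hP0over : Ideal.comap (algebraMap B A) 𝔓₀ = 𝔭)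
    (x : Ideal A → E)
    (hsum : ∀ g : E,
      ∑ τ : E ≃ₐ[F] E, τ (g * x (Ideal.comap (galRestrict B F E A τ) 𝔓₀)) = 0) :
    ∀ 𝔓 : Ideal A, 𝔓.IsPrime → Ideal.comap (algebraMap B A) 𝔓 = 𝔭 → x 𝔓 = 0 := by
  intro 𝔓 hP hPover
  obtain ⟨σ, rfl⟩ := Ideal.exists_comap_galRestrict_eq B F E A
    (p := 𝔭) ⟨hP0, ⟨hP0over.symm⟩⟩ ⟨hP, ⟨hPover.symm⟩⟩
  exact AlgEquiv.eq_zero_of_forall_sum_apply_mul_eq_zero hsum σ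

/-- Let `B` be a Dedekind domain with fraction field `F`, let `E/F` be a finite Galois
extension, and let `A` be the integral closure of `B` in `E`.  Fix a nonzero prime `𝔭` of
`B` and a prime `𝔓₀` of `A` over `𝔭`.  Suppose each prime `𝔓` of `A` over `𝔭` is assigned
an element `x 𝔓 ∈ E` such that for every `g ∈ E` one has
`Σ_{τ ∈ Gal(E/F)} τ (g · x (τ⁻¹ 𝔓₀)) = 0`, where `τ⁻¹ 𝔓₀ = comap τ 𝔓₀` is the image of
`𝔓₀` under the Galois action (via the restriction of `τ` to `A`).  Then `x 𝔓 = 0` for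
every prime `𝔓` of `A` over `𝔭`. -/
theorem eq_zero_of_sum_galois_conjugates_eq_zero
    (B : Type*) [CommRing B] [IsDomain B] [IsDedekindDomain B]
    (F : Type*) [Field F] [Algebra B F] [IsFractionRing B F]
    (E : Type*) [Field E] [Algebra F E] [FiniteDimensional F E] [IsGalois F E]
    (A : Type*) [CommRing A] [Algebra B A] [Algebra A E] [Algebra B E]
    [IsScalarTower B A E] [IsScalarTower B F E] [IsIntegralClosure A B E]
    (𝔭 : Ideal B) (hp : 𝔭.IsPrime) (hp0 : 𝔭 ≠ ⊥)
    (𝔓₀ : Ideal A) (hP0 : 𝔓₀.IsPrime) (hP0over : Ideal.comap (algebraMap B A) 𝔓₀ = 𝔭)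
    (x : Ideal A → E)
    (hsum : ∀ g : E,
      ∑ τ : E ≃ₐ[F] E, τ (g * x (Ideal.comap (galRestrict B F E A τ) 𝔓₀)) = 0) :
    ∀ 𝔓 : Ideal A, 𝔓.IsPrime → Ideal.comap (algebraMap B A) 𝔓 = 𝔭 → x 𝔓 = 0 :=
  eq_zero_of_sum_galois_conjugates_eq_zero_general B F E A 𝔭 𝔓₀ hP0 hP0over x hsum
end
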